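/- arXiv:2411.11546 — 2 statements merged into one kernel-verified Lean document; each statement's English description precedes it below -/
import Mathlib

section
/- Expression of the third Casimir of 𝔰𝔬(N) through even Casimirs (C₃ = (C₀/2 − 1)·C₂ with C₀ = N): in U(𝔰𝔬(N)) one has 2 · ∑_{a,b,c : Fin N} ι(X a b) · ι(X b c) · ι(X c a) = (N − 2) · ∑_{a,b : Fin N} ι(X a b) · ι(X b a). -/
/-!
The symmetry `X (Fin.rev b) (Fin.rev a) = -X a b` reverses the order of the factors in the cubic
Casimir: `C₃ = -∑ X b c * X a b * X c a`. Adding this to `C₃` gives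
`2 C₃ = ∑ [X a b, X b c] * X c a`, and in `𝔰𝔬(N)` the contraction `∑ b, [X a b, X b c]` equals
`(N - 2) X a c`: as matrices, `∑ b, X a b * X b c = (N - 2) E a c + δ a c • 1`, and the identity
terms cancel in the commutator.
-/

open Matrix in
noncomputable section
open Matrix

attribute [local instance 100] LieRing.ofAssociativeRing

/-- The anti-diagonal identity matrix. -/
def soJ (N : ℕ) : Matrix (Fin N) (Fin N) ℂ := fun i j => if j = Fin.rev i then 1 else 0

lemma soJ_mul (N : ℕ) (A : Matrix (Fin N) (Fin N) ℂ) (i j : Fin N) :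
    (soJ N * A) i j = A (Fin.rev i) j := by
  simp [soJ, Matrix.mul_apply, Fin.rev_eq_iff]

lemma mul_soJ (N : ℕ) (A : Matrix (Fin N) (Fin N) ℂ) (i j : Fin N) :
    (A * soJ N) i j = A i (Fin.rev j) := by
  classical
  simp only [Matrix.mul_apply, soJ]
  rw [Finset.sum_eq_single (Fin.rev j)]
  · simp
  · intro b _ hb
    rw [if_neg, mul_zero]
    intro h
    exact hb (by rw [h, Fin.rev_rev])
  · simp

/-- The Lie algebra 𝔰𝔬(N). -/
def soL (N : ℕ) : LieSubalgebra ℂ (Matrix (Fin N) (Fin N) ℂ) where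
  carrier := {A | Aᵀ * soJ N = -(soJ N * A)}
  add_mem' := by
    intro A B hA hB
    simp only [Set.mem_setOf_eq] at *
    rw [Matrix.transpose_add, Matrix.add_mul, hA, hB, Matrix.mul_add, neg_add]
  zero_mem' := by
    simp [Set.mem_setOf_eq]
  smul_mem' := by
    intro c A hA
    simp only [Set.mem_setOf_eq] at *
    rw [Matrix.transpose_smul, Matrix.smul_mul, hA, Matrix.mul_smul, smul_neg]
  lie_mem' := by
    intro A B hA hB
    simp only [Set.mem_setOf_eq] at *
    rw [Ring.lie_def, Matrix.transpose_sub, Matrix.transpose_mul, Matrix.transpose_mul,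
      Matrix.sub_mul, Matrix.mul_assoc, Matrix.mul_assoc, hA, hB, Matrix.mul_neg,
      Matrix.mul_neg, ← Matrix.mul_assoc, ← Matrix.mul_assoc, hA, hB, Matrix.neg_mul,
      Matrix.neg_mul, neg_neg, neg_neg, Matrix.mul_sub, Matrix.mul_assoc, Matrix.mul_assoc]
    abel

/-- The generators X_{ab} of 𝔰𝔬(N), as matrices. -/
def soXmat (N : ℕ) (a b : Fin N) : Matrix (Fin N) (Fin N) ℂ :=
  Matrix.single a b 1 - Matrix.single (Fin.rev b) (Fin.rev a) 1

lemma soXmat_mem (N : ℕ) (a b : Fin N) : soXmat N a b ∈ soL N := by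
  change (soXmat N a b)ᵀ * soJ N = -(soJ N * soXmat N a b)
  ext i j
  rw [mul_soJ]
  simp only [Matrix.neg_apply, soJ_mul, soXmat, Matrix.sub_apply, Matrix.transpose_apply,
    Matrix.single, Matrix.of_apply]
  simp only [Fin.rev_inj, Fin.rev_eq_iff, neg_sub]
  simp [and_comm]

/-- The generators of 𝔰𝔬(N) as elements of the Lie algebra. -/
def soX (N : ℕ) (a b : Fin N) : soL N := ⟨soXmat N a b, soXmat_mem N a b⟩

/-- The extension of the 𝔰𝔬(N) weight system to permutations. -/
def wso (N : ℕ) {m : ℕ} (s : Equiv.Perm (Fin m)) :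
    UniversalEnvelopingAlgebra ℂ (soL N) :=
  ∑ i : Fin m → Fin N,
    (List.ofFn fun k : Fin m =>
      UniversalEnvelopingAlgebra.ι ℂ (soX N (i k) (i (s k)))).prod

section CyclicSums

variable {ι A : Type*} [Fintype ι] [Ring A]

theorem sum_cyclic_mul_eq_neg_sum_swap {σ : ι → ι} (hσ : Function.Involutive σ)
    {Y : ι → ι → A} (hY : ∀ a b, Y (σ b) (σ a) = -Y a b) :
    ∑ a, ∑ b, ∑ c, Y a b * Y b c * Y c a = -∑ a, ∑ b, ∑ c, Y b c * Y a b * Y c a := by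
  have hrev : Function.Involutive fun p : ι × ι × ι => (σ p.2.2, σ p.2.1, σ p.1) :=
    fun p => by simp only [hσ _]
  have hreindex := Equiv.sum_comp (hrev.toPerm _) fun p => Y p.1 p.2.1 * Y p.2.1 p.2.2 * Y p.2.2 p.1
  simp only [Fintype.sum_prod_type, Function.Involutive.coe_toPerm, hY, neg_mul, mul_neg, neg_neg,
    Finset.sum_neg_distrib] at hreindex
  exact hreindex.symm

theorem two_smul_sum_cyclic_mul {R : Type*} [Semiring R] [Module R A] [IsScalarTower R A A]
    {σ : ι → ι} (hσ : Function.Involutive σ) {Y : ι → ι → A}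
    (hY : ∀ a b, Y (σ b) (σ a) = -Y a b) (k : R)
    (hcomm : ∀ a c, ∑ b, (Y a b * Y b c - Y b c * Y a b) = k • Y a c) :
    (2 : R) • ∑ a, ∑ b, ∑ c, Y a b * Y b c * Y c a = k • ∑ a, ∑ b, Y a b * Y b a := by
  calc (2 : R) • ∑ a, ∑ b, ∑ c, Y a b * Y b c * Y c a
      = ∑ a, ∑ c, (∑ b, (Y a b * Y b c - Y b c * Y a b)) * Y c a := by
        rw [two_smul]
        nth_rw 2 [sum_cyclic_mul_eq_neg_sum_swap hσ hY]
        simp only [← sub_eq_add_neg, Finset.sum_mul, sub_mul, Finset.sum_sub_distrib]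
        congr 1 <;> exact Finset.sum_congr rfl fun a _ => Finset.sum_comm
    _ = k • ∑ a, ∑ b, Y a b * Y b a := by
        simp only [hcomm, smul_mul_assoc, Finset.smul_sum]

end CyclicSums

theorem Matrix.single_mul_single_eq_ite {l m n α : Type*} [Fintype m] [DecidableEq l]
    [DecidableEq m] [DecidableEq n] [NonUnitalNonAssocSemiring α]
    (i : l) (j k : m) (l' : n) (c d : α) :
    single i j c * single k l' d = if j = k then single i l' (c * d) else 0 := by
  split_ifs with h
  · rw [h, single_mul_single_same]
  · exact single_mul_single_of_ne (c := c) i j k h d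

theorem soXmat_rev (N : ℕ) (a b : Fin N) :
    soXmat N (Fin.rev b) (Fin.rev a) = -soXmat N a b := by
  simp [soXmat]

theorem soXmat_mul_soXmat (N : ℕ) (a b c : Fin N) :
    soXmat N a b * soXmat N b c =
      single a c 1 - (if b = Fin.rev c then single a (Fin.rev b) 1 else 0)
        - (if b = Fin.rev a then single (Fin.rev b) c 1 else 0)
        + (if a = c then single (Fin.rev b) (Fin.rev b) 1 else 0) := by
  simp only [soXmat, sub_mul, mul_sub, single_mul_single_eq_ite, mul_one, Fin.rev_inj,
    eq_comm (a := Fin.rev a), eq_comm (a := c), if_pos]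
  abel

theorem sum_soXmat_mul_soXmat (N : ℕ) (a c : Fin N) :
    ∑ b, soXmat N a b * soXmat N b c = ((N : ℂ) - 2) • single a c 1 + if a = c then 1 else 0 := by
  have hdiag : ∑ b : Fin N, single (Fin.rev b) (Fin.rev b) (1 : ℂ) = 1 := by
    rw [Fintype.sum_equiv Fin.revPerm (fun b => single (Fin.rev b) (Fin.rev b) (1 : ℂ))
      (fun b => single b b 1) fun _ => rfl, sum_single_one]
  simp only [soXmat_mul_soXmat, Finset.sum_add_distrib, Finset.sum_sub_distrib,
    Finset.sum_ite_eq', Finset.mem_univ, if_true, Fin.rev_rev, Finset.sum_const, Finset.card_univ,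
    Fintype.card_fin]
  rw [Finset.sum_ite_irrel, hdiag, Finset.sum_const_zero, ← Nat.cast_smul_eq_nsmul ℂ]
  module

theorem sum_soXmat_mul_soXmat_swap (N : ℕ) (a c : Fin N) :
    ∑ b, soXmat N b c * soXmat N a b =
      ((N : ℂ) - 2) • single (Fin.rev c) (Fin.rev a) 1 + if a = c then 1 else 0 := by
  calc ∑ b, soXmat N b c * soXmat N a b
      = ∑ b, soXmat N (Fin.rev c) (Fin.rev b) * soXmat N (Fin.rev b) (Fin.rev a) := by
        simp only [soXmat_rev, neg_mul_neg]
    _ = ∑ b, soXmat N (Fin.rev c) b * soXmat N b (Fin.rev a) :=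
        Fintype.sum_equiv Fin.revPerm _ _ fun _ => rfl
    _ = _ := by simp only [sum_soXmat_mul_soXmat, Fin.rev_inj, eq_comm (a := c)]

theorem sum_lie_soXmat (N : ℕ) (a c : Fin N) :
    ∑ b, ⁅soXmat N a b, soXmat N b c⁆ = ((N : ℂ) - 2) • soXmat N a c := by
  simp only [Ring.lie_def, Finset.sum_sub_distrib]
  rw [sum_soXmat_mul_soXmat, sum_soXmat_mul_soXmat_swap, soXmat]
  module

theorem soX_rev (N : ℕ) (a b : Fin N) : soX N (Fin.rev b) (Fin.rev a) = -soX N a b :=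
  Subtype.ext (soXmat_rev N a b)

theorem sum_lie_soX (N : ℕ) (a c : Fin N) :
    ∑ b, ⁅soX N a b, soX N b c⁆ = ((N : ℂ) - 2) • soX N a c :=
  Subtype.ext (by push_cast; exact sum_lie_soXmat N a c)

theorem sum_commutator_ι_soX (N : ℕ) (a c : Fin N) :
    ∑ b, (UniversalEnvelopingAlgebra.ι ℂ (soX N a b) * UniversalEnvelopingAlgebra.ι ℂ (soX N b c) -
        UniversalEnvelopingAlgebra.ι ℂ (soX N b c) * UniversalEnvelopingAlgebra.ι ℂ (soX N a b)) =
      ((N : ℂ) - 2) • UniversalEnvelopingAlgebra.ι ℂ (soX N a c) := by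
  simp only [← Ring.lie_def, ← LieHom.map_lie, ← map_sum, sum_lie_soX, map_smul]

/-- 2·C₃ = (N − 2)·C₂ in U(𝔰𝔬(N)). -/
theorem so_casimir_three (N : ℕ) :
    (2 : ℂ) • ∑ a : Fin N, ∑ b : Fin N, ∑ c : Fin N,
        UniversalEnvelopingAlgebra.ι ℂ (soX N a b) *
          UniversalEnvelopingAlgebra.ι ℂ (soX N b c) *
          UniversalEnvelopingAlgebra.ι ℂ (soX N c a) =
      ((N : ℂ) - 2) • ∑ a : Fin N, ∑ b : Fin N,
        UniversalEnvelopingAlgebra.ι ℂ (soX N a b) *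
          UniversalEnvelopingAlgebra.ι ℂ (soX N b a) :=
  two_smul_sum_cyclic_mul Fin.rev_involutive (fun a b => by rw [soX_rev, map_neg]) _
    (sum_commutator_ι_soX N)
end
end

section
/- Value of the 𝔰𝔬(N) weight system on the chord diagram p₂ with two crossing chords: in U(𝔰𝔬(N)) one has ∑_{i₁,i₂,i₃,i₄ : Fin N} ι(X i₁ i₃) · ι(X i₂ i₄) · ι(X i₃ i₁) · ι(X i₄ i₂) = C₂² − 2·N·C₂ + 4·C₂, where C₂ := ∑_{a,b} ι(X a b) · ι(X b a). -/
open Matrix in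
noncomputable section
open Matrix

attribute [local instance 100] LieRing.ofAssociativeRing

/-- The second Casimir element C₂ of 𝔰𝔬(N). -/
def soC2 (N : ℕ) : UniversalEnvelopingAlgebra ℂ ↥(soL N) :=
  ∑ a : Fin N, ∑ b : Fin N,
    UniversalEnvelopingAlgebra.ι ℂ (soX N a b) * UniversalEnvelopingAlgebra.ι ℂ (soX N b a)

/-! Regroup the sum as `∑ i₁ i₃, x i₁ i₃ * (∑ i₂ i₄, x i₂ i₄ * x i₃ i₁ * x i₄ i₂)`. Moving the
middle generator `y = x a b` to the front of `∑ c d, x c d * y * x d c` costs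
`∑ c d, ι ⁅X a b, X c d⁆ * x d c`. The `𝔰𝔬(N)` bracket is the `𝔤𝔩(N)` bracket minus its mirror image
under `E a b ↦ E b̄ ā`, and each half contracts, via `∑ c, ⁅X c a, X b c⁆ = (2 - N) • X b a`, to
`(N - 2) • y`. Hence the inner sum is `y * C₂ + (4 - 2N) • y`, and summing over `i₁, i₃` gives
`C₂² + (4 - 2N) • C₂`. -/

lemma single_one_mul_single_one {N : ℕ} (a b c d : Fin N) :
    Matrix.single a b (1 : ℂ) * Matrix.single c d 1 =
      if b = c then Matrix.single a d 1 else 0 := by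
  split_ifs with h
  · subst h; simp
  · exact Matrix.single_mul_single_of_ne (c := (1 : ℂ)) a b c h 1

/-- The `𝔤𝔩(N)` bracket `⁅E a b, E c d⁆ = δ b c • E a d - δ a d • E c b` with each `E` replaced
by `X`. -/
def glLieX {N : ℕ} (a b c d : Fin N) : soL N :=
  (if b = c then soX N a d else 0) - (if a = d then soX N c b else 0)

@[simp]
lemma coe_soX {N : ℕ} (a b : Fin N) : (soX N a b : Matrix (Fin N) (Fin N) ℂ) = soXmat N a b :=
  rfl

lemma soXmat_commutator {N : ℕ} (a b c d : Fin N) :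
    soXmat N a b * soXmat N c d - soXmat N c d * soXmat N a b =
      ((if b = c then soXmat N a d else 0) - (if a = d then soXmat N c b else 0)) -
      ((if Fin.rev a = c then soXmat N (Fin.rev b) d else 0) -
        (if Fin.rev b = d then soXmat N c (Fin.rev a) else 0)) := by
  simp only [soXmat, sub_mul, mul_sub, single_one_mul_single_one, Fin.rev_eq_iff, Fin.rev_rev,
    @eq_comm _ d a, @eq_comm _ c b, @eq_comm _ d (Fin.rev b), @eq_comm _ c (Fin.rev a)]
  split_ifs <;> abel

lemma soX_lie {N : ℕ} (a b c d : Fin N) :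
    ⁅soX N a b, soX N c d⁆ = glLieX a b c d - glLieX (Fin.rev b) (Fin.rev a) c d := by
  ext : 1
  rw [LieSubalgebra.coe_bracket, Ring.lie_def, coe_soX, coe_soX, soXmat_commutator]
  simp only [glLieX, AddSubgroupClass.coe_sub,
    apply_ite (fun x : soL N => (x : Matrix (Fin N) (Fin N) ℂ)), ZeroMemClass.coe_zero, coe_soX]

lemma soX_rev_rev {N : ℕ} (a b : Fin N) : soX N (Fin.rev b) (Fin.rev a) = -soX N a b := by
  ext : 1
  simp [soXmat]

lemma sum_soX_diag {N : ℕ} : ∑ c : Fin N, soX N c c = 0 := by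
  ext : 1
  rw [AddSubmonoidClass.coe_finsetSum]
  simp only [coe_soX, soXmat, Finset.sum_sub_distrib, ZeroMemClass.coe_zero]
  rw [sub_eq_zero]
  exact (Fintype.sum_equiv Fin.revPerm _ _ fun c => rfl).symm

lemma sum_soX_lie_soX {N : ℕ} (a b : Fin N) :
    ∑ c : Fin N, ⁅soX N c a, soX N b c⁆ = ((2 : ℂ) - N) • soX N b a := by
  have h_diag : ∑ c : Fin N, (if a = b then soX N c c else 0) = 0 := by
    split_ifs <;> simp [sum_soX_diag]
  simp only [soX_lie, glLieX, Fin.rev_rev, Finset.sum_sub_distrib, h_diag, if_true,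
    Finset.sum_const, Finset.card_univ, Fintype.card_fin, Fin.rev_eq_iff (j := b),
    Finset.sum_ite_eq, Finset.sum_ite_eq', Finset.mem_univ, soX_rev_rev]
  rw [← Nat.cast_smul_eq_nsmul ℂ]
  module

section Enveloping

variable {N : ℕ}

local notation "ι" => UniversalEnvelopingAlgebra.ι ℂ (L := soL N)

lemma ι_mul_sub_mul (y z : soL N) : ι y * ι z - ι z * ι y = ι ⁅y, z⁆ := by
  rw [LieHom.map_lie, Ring.lie_def]

lemma sum_ι_soX_commutator (a b : Fin N) :
    ∑ c : Fin N, (ι (soX N c a) * ι (soX N b c) - ι (soX N b c) * ι (soX N c a)) =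
      ((2 : ℂ) - N) • ι (soX N b a) := by
  simp only [ι_mul_sub_mul, ← map_sum, sum_soX_lie_soX, map_smul]

lemma sum_ι_glLieX_mul (a b : Fin N) :
    ∑ c : Fin N, ∑ d : Fin N, ι (glLieX a b c d) * ι (soX N d c) =
      ((N : ℂ) - 2) • ι (soX N a b) := by
  have h := sum_ι_soX_commutator b a
  rw [Finset.sum_sub_distrib] at h
  simp only [glLieX, map_sub, apply_ite ι, map_zero, sub_mul, ite_mul, zero_mul,
    Finset.sum_sub_distrib, Finset.sum_ite_irrel, Finset.sum_const_zero, Finset.sum_ite_eq,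
    Finset.mem_univ, if_true]
  rw [← neg_sub, h]
  module

lemma sum_ι_lie_soX_mul (a b : Fin N) :
    ∑ c : Fin N, ∑ d : Fin N, ι ⁅soX N a b, soX N c d⁆ * ι (soX N d c) =
      ((2 : ℂ) * N - 4) • ι (soX N a b) := by
  simp only [soX_lie, map_sub, sub_mul, Finset.sum_sub_distrib, sum_ι_glLieX_mul, soX_rev_rev,
    map_neg]
  module

lemma sum_soX_mul_soX_mul_soX (a b : Fin N) :
    ∑ c : Fin N, ∑ d : Fin N, ι (soX N c d) * ι (soX N a b) * ι (soX N d c) =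
      ι (soX N a b) * soC2 N + ((4 : ℂ) - 2 * N) • ι (soX N a b) := by
  have h_swap (c d : Fin N) : ι (soX N c d) * ι (soX N a b) * ι (soX N d c) =
      ι (soX N a b) * (ι (soX N c d) * ι (soX N d c)) -
        ι ⁅soX N a b, soX N c d⁆ * ι (soX N d c) := by
    rw [← ι_mul_sub_mul]
    noncomm_ring
  simp only [h_swap, Finset.sum_sub_distrib, sum_ι_lie_soX_mul, soC2, Finset.mul_sum]
  module

end Enveloping

/-- The value of the 𝔰𝔬(N) weight system on the chord diagram with two crossing chords. -/
theorem wso_two_crossing_chords (N : ℕ) :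
    (∑ i₁ : Fin N, ∑ i₂ : Fin N, ∑ i₃ : Fin N, ∑ i₄ : Fin N,
        UniversalEnvelopingAlgebra.ι ℂ (soX N i₁ i₃) *
          UniversalEnvelopingAlgebra.ι ℂ (soX N i₂ i₄) *
          UniversalEnvelopingAlgebra.ι ℂ (soX N i₃ i₁) *
          UniversalEnvelopingAlgebra.ι ℂ (soX N i₄ i₂)) =
      soC2 N ^ 2 - ((2 : ℂ) * (N : ℂ)) • soC2 N + (4 : ℂ) • soC2 N := by
  let x (a b : Fin N) := UniversalEnvelopingAlgebra.ι ℂ (soX N a b)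
  calc _ = ∑ i₁ : Fin N, ∑ i₃ : Fin N,
        x i₁ i₃ * ∑ i₂ : Fin N, ∑ i₄ : Fin N, x i₂ i₄ * x i₃ i₁ * x i₄ i₂ := by
        simp only [Finset.mul_sum, ← mul_assoc]
        exact Finset.sum_congr rfl fun _ _ => Finset.sum_comm
    _ = ∑ i₁ : Fin N, ∑ i₃ : Fin N,
        x i₁ i₃ * (x i₃ i₁ * soC2 N + ((4 : ℂ) - 2 * N) • x i₃ i₁) := by
        simp only [x, sum_soX_mul_soX_mul_soX]
    _ = soC2 N * soC2 N + ((4 : ℂ) - 2 * N) • soC2 N := by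
        simp only [mul_add, mul_smul_comm, ← mul_assoc, Finset.sum_add_distrib, ← Finset.sum_mul,
          ← Finset.smul_sum, soC2, x]
    _ = _ := by rw [sq]; module

end
end
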